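/- Let X be a space of homogeneous type with dimension parameter n. Let 0 < t ≤ s, let B₁, B₂ be balls of radius t, and let {B_β}_{β ∈ I} be the family of balls of radius t centered at Christ dyadic cube centers at scale t. If γ, δ > n, then for every ε > 0 there is C > 0 such that Σ_{β ∈ I} (1 + dist(B₁,B_β)/s)^{−γ} (1 + dist(B_β,B₂)/s)^{−δ} ≤ C (s/t)^{n+ε} (1 + dist(B₁,B₂)/s)^{−min(γ,δ)}. -/
import Mathlib


open MeasureTheory Metric Set ENNReal Function

noncomputable section

/-- The distance between two sets in a metric space. -/
def setDist {X : Type*} [PseudoMetricSpace X] (A B : Set X) : ℝ :=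
  sInf {d | ∃ a ∈ A, ∃ b ∈ B, d = dist a b}

/-- The `L²(A)` norm of a function `f`, i.e. the `L²` norm of `f` restricted to `A`. -/
def nrm {X : Type*} [MeasurableSpace X] (μ : Measure X) (A : Set X) (f : X → ℂ) : ℝ≥0∞ :=
  eLpNorm (A.indicator f) 2 μ

/-- Weak L² off-diagonal estimates of order `γ` with constant `C` for a family
`{S_t}_{t>0}` of operators, with homogeneity order `2m`:  for every `t > 0`, for arbitrary
balls `B₁, B₂` of radius `t^{1/(2m)}`, and every `f` supported in `B₁`,
`‖S_t f‖_{L²(B₂)} ≤ C (1 + dist(B₁,B₂)^{2m}/t)^{-γ} ‖f‖_{L²(B₁)}`. -/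
def WeakOffDiag {X : Type*} [PseudoMetricSpace X] [MeasurableSpace X] (μ : Measure X)
    (m : ℝ) (S : ℝ → (X → ℂ) → X → ℂ) (γ C : ℝ) : Prop :=
  ∀ t > 0, ∀ x₁ x₂ : X, ∀ f : X → ℂ,
    Function.support f ⊆ ball x₁ (t ^ (1 / (2 * m))) →
    nrm μ (ball x₂ (t ^ (1 / (2 * m)))) (S t f) ≤
      ENNReal.ofReal
        (C * (1 + setDist (ball x₁ (t ^ (1 / (2 * m)))) (ball x₂ (t ^ (1 / (2 * m)))) ^ (2 * m)
            / t) ^ (-γ)) *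
      nrm μ (ball x₁ (t ^ (1 / (2 * m)))) f

/-- Strong homogeneity of a doubling measure with dimension parameter `n`:
`V(x, λr) ≤ A λ^n V(x,r)` for all `λ ≥ 1`. -/
def DoublingDim {X : Type*} [PseudoMetricSpace X] [MeasurableSpace X] (μ : Measure X)
    (A n : ℝ) : Prop :=
  ∀ (x : X) (r lam : ℝ), 0 < r → 1 ≤ lam →
    μ (ball x (lam * r)) ≤ ENNReal.ofReal (A * lam ^ n) * μ (ball x r)

end

lemma setDist_nonneg' {X : Type*} [PseudoMetricSpace X] (A B : Set X) : 0 ≤ setDist A B :=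
  Real.sInf_nonneg (by rintro d ⟨a, _, b, _, rfl⟩; exact dist_nonneg)

lemma setDist_le_dist {X : Type*} [PseudoMetricSpace X] {A B : Set X} {a b : X}
    (ha : a ∈ A) (hb : b ∈ B) : setDist A B ≤ dist a b :=
  csInf_le ⟨0, by rintro d ⟨a, _, b, _, rfl⟩; exact dist_nonneg⟩ ⟨a, ha, b, hb, rfl⟩

lemma dist_sub_le_setDist {X : Type*} [PseudoMetricSpace X] {x y : X} {r : ℝ} (hr : 0 < r) :
    dist x y - 2 * r ≤ setDist (ball x r) (ball y r) := by
  have hne : {d | ∃ a ∈ ball x r, ∃ b ∈ ball y r, d = dist a b}.Nonempty :=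
    ⟨dist x y, x, mem_ball_self hr, y, mem_ball_self hr, rfl⟩
  apply le_csInf hne
  rintro d ⟨a, ha, b, hb, rfl⟩
  have h4 := dist_triangle4 x a b y
  have ha' : dist x a < r := by rw [mem_ball, dist_comm] at ha; exact ha
  have hb' : dist b y < r := by rwa [mem_ball] at hb
  linarith

lemma pointwise_bound {a b c m : ℝ} (ha : 0 ≤ a) (hb : 0 ≤ b) (hc0 : 0 ≤ c)
    (hc : c ≤ a + b + 4) (hm : 0 ≤ m) :
    (1 + a) ^ (-m) * (1 + b) ^ (-m) ≤
      5 ^ m * (1 + c) ^ (-m) * ((1 + a) ^ (-m) + (1 + b) ^ (-m)) := by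
  have hA : (0:ℝ) < 1 + a := by linarith
  have hB : (0:ℝ) < 1 + b := by linarith
  have hC : (0:ℝ) < 1 + c := by linarith
  have key : ∀ u v : ℝ, 0 ≤ u → 0 ≤ v → v ≤ u → c ≤ a + b + 4 → 1 + c ≤ 5 * (1 + u) →
      (1 + u) ^ (-m) * (1 + v) ^ (-m) ≤
        5 ^ m * (1 + c) ^ (-m) * ((1 + u) ^ (-m) + (1 + v) ^ (-m)) := by
    intro u v hu hv hvu _ h5
    have hU : (0:ℝ) < 1 + u := by linarith
    have h1 : (1 + u) ^ (-m) ≤ ((1 + c) / 5) ^ (-m) := by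
      apply Real.rpow_le_rpow_of_nonpos (by positivity) (by linarith) (by linarith)
    have h2 : ((1 + c) / 5) ^ (-m) = 5 ^ m * (1 + c) ^ (-m) := by
      rw [Real.div_rpow hC.le (by norm_num), Real.rpow_neg (by norm_num : (0:ℝ) ≤ 5)]
      field_simp
    have h3 : (1 + v) ^ (-m) ≤ (1 + u) ^ (-m) + (1 + v) ^ (-m) := by
      have : (0:ℝ) ≤ (1 + u) ^ (-m) := by positivity
      linarith
    calc (1 + u) ^ (-m) * (1 + v) ^ (-m)
        ≤ (5 ^ m * (1 + c) ^ (-m)) * (1 + v) ^ (-m) := by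
          apply mul_le_mul_of_nonneg_right _ (by positivity)
          rw [← h2]; exact h1
      _ ≤ 5 ^ m * (1 + c) ^ (-m) * ((1 + u) ^ (-m) + (1 + v) ^ (-m)) := by
          apply mul_le_mul_of_nonneg_left h3 (by positivity)
  rcases le_total b a with hba | hab
  · exact key a b ha hb hba hc (by linarith)
  · have := key b a hb ha hab (by linarith) (by linarith)
    calc (1 + a) ^ (-m) * (1 + b) ^ (-m) = (1 + b) ^ (-m) * (1 + a) ^ (-m) := by ring
      _ ≤ 5 ^ m * (1 + c) ^ (-m) * ((1 + b) ^ (-m) + (1 + a) ^ (-m)) := this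
      _ = 5 ^ m * (1 + c) ^ (-m) * ((1 + a) ^ (-m) + (1 + b) ^ (-m)) := by ring

lemma schur_sum {X : Type*} [MetricSpace X] {n m K t s : ℝ} (hn : 0 < n) (hm : n < m)
    (hK : 0 < K) (ht : 0 < t) (hts : t ≤ s) {I : Type} {z : I → X} (x : X)
    (hcount : ∀ j : ℕ, {β : I | z β ∈ ball x (2 ^ j * t)}.Finite ∧
        ({β : I | z β ∈ ball x (2 ^ j * t)}.ncard : ℝ) ≤ K * 2 ^ ((j : ℝ) * n))
    (F : Finset I) :
    ∑ β ∈ F, (1 + setDist (ball x t) (ball (z β) t) / s) ^ (-m) ≤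
      K * 16 ^ n * (s / t) ^ n * (1 - 2 ^ (n - m))⁻¹ := by
  classical
  have hs : 0 < s := lt_of_lt_of_le ht hts
  have hst1 : (1:ℝ) ≤ s / t := (one_le_div ht).2 hts
  set q : ℝ := 2 ^ (n - m) with hqdef
  have hq0 : 0 < q := Real.rpow_pos_of_pos (by norm_num) _
  have hq1 : q < 1 := Real.rpow_lt_one_of_one_lt_of_neg (by norm_num) (by linarith)
  -- choose k with 8 s / t ≤ 2 ^ k ≤ 16 s / t
  have h8 : (1:ℝ) ≤ 8 * s / t := by
    rw [mul_div_assoc]; nlinarith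
  have hlogb0 : 0 ≤ Real.logb 2 (8 * s / t) := Real.logb_nonneg (by norm_num) h8
  have h8pos : (0:ℝ) < 8 * s / t := by linarith
  obtain ⟨k, hk1, hk2⟩ : ∃ k : ℕ, 8 * s / t ≤ (2:ℝ) ^ k ∧ ((2:ℝ) ^ k) ≤ 16 * s / t := by
    refine ⟨⌈Real.logb 2 (8 * s / t)⌉₊, ?_, ?_⟩
    · have := Real.rpow_le_rpow_of_exponent_le (by norm_num : (1:ℝ) ≤ 2)
        (Nat.le_ceil (Real.logb 2 (8 * s / t)))
      rwa [Real.rpow_logb (by norm_num) (by norm_num) h8pos, Real.rpow_natCast] at this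
    · have hkc : ((⌈Real.logb 2 (8 * s / t)⌉₊ : ℕ):ℝ) ≤ Real.logb 2 (8 * s / t) + 1 :=
        (Nat.ceil_lt_add_one hlogb0).le
      have := Real.rpow_le_rpow_of_exponent_le (by norm_num : (1:ℝ) ≤ 2) hkc
      rw [Real.rpow_add (by norm_num), Real.rpow_logb (by norm_num) (by norm_num) h8pos,
        Real.rpow_one, Real.rpow_natCast] at this
      calc ((2:ℝ) ^ ⌈Real.logb 2 (8 * s / t)⌉₊) ≤ 8 * s / t * 2 := this
        _ = 16 * s / t := by ring
  set idx : I → ℕ := fun β => ⌈Real.logb 2 (max 1 (dist x (z β) / (4 * s)))⌉₊ with hidx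
  set q0 : ℝ := 2 ^ (-m) with hq0def
  have hq0pos : 0 < q0 := Real.rpow_pos_of_pos (by norm_num) _
  have pow_eq : ∀ j : ℕ, ((2:ℝ) ^ j) ^ (-m) = q0 ^ j := by
    intro j
    rw [hq0def, ← Real.rpow_natCast (2:ℝ) j, ← Real.rpow_natCast ((2:ℝ) ^ (-m)) j,
      ← Real.rpow_mul (by norm_num), ← Real.rpow_mul (by norm_num), mul_comm]
  have pow_eq2 : ∀ j : ℕ, ((2:ℝ) ^ n) ^ j * q0 ^ j = q ^ j := by
    intro j
    rw [← mul_pow, hq0def, hqdef, ← Real.rpow_add (by norm_num)]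
    ring_nf
  -- (A) per-term bound
  have termA : ∀ β ∈ F, (1 + setDist (ball x t) (ball (z β) t) / s) ^ (-m) ≤ q0 ^ idx β := by
    intro β _
    have hsd : 0 ≤ setDist (ball x t) (ball (z β) t) := setDist_nonneg' _ _
    have hbase1 : (1:ℝ) ≤ 1 + setDist (ball x t) (ball (z β) t) / s := by
      have : 0 ≤ setDist (ball x t) (ball (z β) t) / s := div_nonneg hsd hs.le
      linarith
    have hbase : (2:ℝ) ^ idx β ≤ 1 + setDist (ball x t) (ball (z β) t) / s := by
      rcases Nat.eq_zero_or_pos (idx β) with h0 | hpos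
      · rw [h0]; simpa using hbase1
      · obtain ⟨j, hJ⟩ := Nat.exists_eq_succ_of_ne_zero hpos.ne'
        rw [hJ]
        have hJ' : ⌈Real.logb 2 (max 1 (dist x (z β) / (4 * s)))⌉₊ = j + 1 := hJ
        have hgt : (j:ℝ) < Real.logb 2 (max 1 (dist x (z β) / (4 * s))) := by
          by_contra hle
          push_neg at hle
          have : ⌈Real.logb 2 (max 1 (dist x (z β) / (4 * s)))⌉₊ ≤ j := Nat.ceil_le.2 hle
          omega
        have hmaxpos : (0:ℝ) < max 1 (dist x (z β) / (4 * s)) := lt_of_lt_of_le one_pos (le_max_left _ _)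
        have h2j : (2:ℝ) ^ j < max 1 (dist x (z β) / (4 * s)) := by
          have := Real.rpow_lt_rpow_of_exponent_lt (by norm_num : (1:ℝ) < 2) hgt
          rwa [Real.rpow_logb (by norm_num) (by norm_num) hmaxpos, Real.rpow_natCast] at this
        have h2j1 : (1:ℝ) ≤ (2:ℝ) ^ j := one_le_pow₀ (by norm_num)
        have hd : (2:ℝ) ^ j * (4 * s) < dist x (z β) := by
          rcases max_cases (1:ℝ) (dist x (z β) / (4 * s)) with ⟨he, _⟩ | ⟨he, _⟩
          · rw [he] at h2j; linarith
          · rw [he] at h2j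
            calc (2:ℝ) ^ j * (4 * s) < dist x (z β) / (4 * s) * (4 * s) := by
                  apply mul_lt_mul_of_pos_right h2j; linarith
              _ = dist x (z β) := by field_simp
        have hsd2 : (2:ℝ) ^ j * (2 * s) ≤ setDist (ball x t) (ball (z β) t) := by
          have := dist_sub_le_setDist (x := x) (y := z β) ht
          nlinarith
        have : (2:ℝ) ^ j * 2 ≤ setDist (ball x t) (ball (z β) t) / s := by
          rw [le_div_iff₀ hs]; nlinarith
        calc (2:ℝ) ^ (j + 1) = 2 ^ j * 2 := by ring
          _ ≤ 1 + setDist (ball x t) (ball (z β) t) / s := by linarith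
    have := Real.rpow_le_rpow_of_nonpos (by positivity) hbase (by linarith : -m ≤ 0)
    calc (1 + setDist (ball x t) (ball (z β) t) / s) ^ (-m)
        ≤ ((2:ℝ) ^ idx β) ^ (-m) := this
      _ = q0 ^ idx β := pow_eq _
  -- (B) fiber cardinality bound
  have cardB : ∀ j : ℕ, ((F.filter (fun β => idx β = j)).card : ℝ) ≤
      K * 2 ^ ((k:ℝ) * n) * ((2:ℝ) ^ n) ^ j := by
    intro j
    have hsub : ↑(F.filter (fun β => idx β = j)) ⊆ {β : I | z β ∈ ball x (2 ^ (j + k) * t)} := by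
      intro β hβ
      simp only [Finset.coe_filter, Set.mem_setOf_eq] at hβ
      have hle : Real.logb 2 (max 1 (dist x (z β) / (4 * s))) ≤ (j:ℝ) := by
        have h := Nat.le_ceil (Real.logb 2 (max 1 (dist x (z β) / (4 * s))))
        have h2 : ⌈Real.logb 2 (max 1 (dist x (z β) / (4 * s)))⌉₊ = j := hβ.2
        rw [h2] at h; exact h
      have hmaxpos : (0:ℝ) < max 1 (dist x (z β) / (4 * s)) :=
        lt_of_lt_of_le one_pos (le_max_left _ _)
      have hmax : max 1 (dist x (z β) / (4 * s)) ≤ (2:ℝ) ^ j := by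
        have := Real.rpow_le_rpow_of_exponent_le (by norm_num : (1:ℝ) ≤ 2) hle
        rwa [Real.rpow_logb (by norm_num) (by norm_num) hmaxpos, Real.rpow_natCast] at this
      have hd : dist x (z β) ≤ (2:ℝ) ^ j * (4 * s) := by
        have h1 : dist x (z β) / (4 * s) ≤ (2:ℝ) ^ j := le_trans (le_max_right _ _) hmax
        calc dist x (z β) = dist x (z β) / (4 * s) * (4 * s) := by field_simp
          _ ≤ (2:ℝ) ^ j * (4 * s) := by nlinarith
      have h8t : 8 * s ≤ (2:ℝ) ^ k * t := by
        rw [div_le_iff₀ ht] at hk1; linarith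
      have : dist (z β) x < 2 ^ (j + k) * t := by
        rw [dist_comm]
        have h2j1 : (1:ℝ) ≤ (2:ℝ) ^ j := one_le_pow₀ (by norm_num)
        have h2jpos : (0:ℝ) < (2:ℝ) ^ j := by positivity
        calc dist x (z β) ≤ (2:ℝ) ^ j * (4 * s) := hd
          _ < (2:ℝ) ^ j * (8 * s) := by
              apply mul_lt_mul_of_pos_left _ h2jpos; linarith
          _ ≤ (2:ℝ) ^ j * ((2:ℝ) ^ k * t) := mul_le_mul_of_nonneg_left h8t h2jpos.le
          _ = 2 ^ (j + k) * t := by rw [pow_add]; ring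
      exact this
    have hfin := (hcount (j + k)).1
    have hcard := (hcount (j + k)).2
    have h1 : ((F.filter (fun β => idx β = j)).card : ℝ) ≤
        ({β : I | z β ∈ ball x (2 ^ (j + k) * t)}.ncard : ℝ) := by
      have := Set.ncard_le_ncard hsub hfin
      rw [Set.ncard_coe_finset] at this
      exact_mod_cast this
    refine h1.trans (hcard.trans ?_)
    have heq : (2:ℝ) ^ ((((j + k) : ℕ):ℝ) * n) = 2 ^ ((k:ℝ) * n) * ((2:ℝ) ^ n) ^ j := by
      rw [← Real.rpow_natCast ((2:ℝ) ^ n) j, ← Real.rpow_mul (by norm_num),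
        ← Real.rpow_add (by norm_num)]
      congr 1
      push_cast
      ring
    rw [heq]
    ring_nf
    exact le_refl _
  -- main chain
  have hq0' : (0:ℝ) ≤ q0 := hq0pos.le
  calc ∑ β ∈ F, (1 + setDist (ball x t) (ball (z β) t) / s) ^ (-m)
      ≤ ∑ β ∈ F, q0 ^ idx β := Finset.sum_le_sum termA
    _ = ∑ j ∈ F.image idx, ∑ β ∈ F.filter (fun β => idx β = j), q0 ^ idx β :=
        (Finset.sum_fiberwise_of_maps_to (fun β hβ => Finset.mem_image_of_mem idx hβ) _).symm
    _ = ∑ j ∈ F.image idx, ((F.filter (fun β => idx β = j)).card : ℝ) * q0 ^ j := by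
        refine Finset.sum_congr rfl fun j _ => ?_
        rw [Finset.sum_congr rfl (fun β hβ => by rw [(Finset.mem_filter.1 hβ).2]),
          Finset.sum_const, nsmul_eq_mul]
    _ ≤ ∑ j ∈ F.image idx, (K * 2 ^ ((k:ℝ) * n)) * q ^ j := by
        refine Finset.sum_le_sum fun j _ => ?_
        calc ((F.filter (fun β => idx β = j)).card : ℝ) * q0 ^ j
            ≤ (K * 2 ^ ((k:ℝ) * n) * ((2:ℝ) ^ n) ^ j) * q0 ^ j :=
              mul_le_mul_of_nonneg_right (cardB j) (by positivity)
          _ = (K * 2 ^ ((k:ℝ) * n)) * (((2:ℝ) ^ n) ^ j * q0 ^ j) := by ring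
          _ = (K * 2 ^ ((k:ℝ) * n)) * q ^ j := by rw [pow_eq2]
    _ = (K * 2 ^ ((k:ℝ) * n)) * ∑ j ∈ F.image idx, q ^ j := by rw [Finset.mul_sum]
    _ ≤ (K * 2 ^ ((k:ℝ) * n)) * (1 - q)⁻¹ := by
        have hsum : ∑ j ∈ F.image idx, q ^ j ≤ ∑' j : ℕ, q ^ j :=
          Summable.sum_le_tsum _ (fun i _ => by positivity)
            (summable_geometric_of_lt_one hq0.le hq1)
        rw [tsum_geometric_of_lt_one hq0.le hq1] at hsum
        exact mul_le_mul_of_nonneg_left hsum (by positivity)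
    _ ≤ K * 16 ^ n * (s / t) ^ n * (1 - q)⁻¹ := by
        have h2kn : (2:ℝ) ^ ((k:ℝ) * n) ≤ 16 ^ n * (s / t) ^ n := by
          have e1 : (2:ℝ) ^ ((k:ℝ) * n) = ((2:ℝ) ^ k) ^ n := by
            rw [← Real.rpow_natCast (2:ℝ) k, ← Real.rpow_mul (by norm_num)]
          have e2 : ((2:ℝ) ^ k) ^ n ≤ (16 * (s / t)) ^ n := by
            apply Real.rpow_le_rpow (by positivity) _ hn.le
            rw [← mul_div_assoc]; exact hk2
          have e3 : (16 * (s / t) : ℝ) ^ n = 16 ^ n * (s / t) ^ n :=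
            Real.mul_rpow (by norm_num) (by positivity)
          rw [e1, ← e3]; exact e2
        have hinv : (0:ℝ) ≤ (1 - q)⁻¹ := by
          rw [inv_nonneg]; linarith
        calc (K * 2 ^ ((k:ℝ) * n)) * (1 - q)⁻¹
            ≤ (K * (16 ^ n * (s / t) ^ n)) * (1 - q)⁻¹ := by
              apply mul_le_mul_of_nonneg_right _ hinv
              exact mul_le_mul_of_nonneg_left h2kn hK.le
          _ = K * 16 ^ n * (s / t) ^ n * (1 - q)⁻¹ := by ring

lemma setDist_comm' {X : Type*} [PseudoMetricSpace X] (A B : Set X) :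
    setDist A B = setDist B A := by
  unfold setDist
  congr 1
  ext d
  constructor <;> rintro ⟨a, ha, b, hb, rfl⟩
  · exact ⟨b, hb, a, ha, dist_comm a b⟩
  · exact ⟨b, hb, a, ha, dist_comm a b⟩


/-- Discrete Schur-type composition estimate over Christ dyadic cubes:
for `γ, δ > n` and every `ε > 0` there is `C > 0` such that for `0 < t ≤ s`, balls
`B₁ = B(x₁,t)`, `B₂ = B(x₂,t)` and cube-center balls `B_β = B(z β, t)`,
`Σ_β (1+dist(B₁,B_β)/s)^{-γ} (1+dist(B_β,B₂)/s)^{-δ}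
  ≤ C (s/t)^{n+ε} (1+dist(B₁,B₂)/s)^{-min(γ,δ)}`. -/
theorem stmt_6 {X : Type*} [MetricSpace X] (n K : ℝ) (hn : 0 < n) (hK : 0 < K) :
    ∀ γ δ : ℝ, n < γ → n < δ → ∀ ε > (0:ℝ), ∃ C > (0:ℝ), ∀ t s : ℝ, 0 < t → t ≤ s →
      ∀ (I : Type) (z : I → X) (x₁ x₂ : X),
        (∀ (j : ℕ) (x : X), {β : I | z β ∈ Metric.ball x (2 ^ j * t)}.Finite ∧
            ({β : I | z β ∈ Metric.ball x (2 ^ j * t)}.ncard : ℝ) ≤ K * 2 ^ ((j : ℝ) * n)) →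
        ∑' β : I, ENNReal.ofReal
            ((1 + setDist (Metric.ball x₁ t) (Metric.ball (z β) t) / s) ^ (-γ) *
              (1 + setDist (Metric.ball (z β) t) (Metric.ball x₂ t) / s) ^ (-δ)) ≤
          ENNReal.ofReal (C * (s / t) ^ (n + ε) *
            (1 + setDist (Metric.ball x₁ t) (Metric.ball x₂ t) / s) ^ (-(min γ δ))) := by
  intro γ δ hγ hδ ε hε
  set m : ℝ := min γ δ with hmdef
  have hm : n < m := lt_min hγ hδ
  have hm0 : 0 < m := hn.trans hm
  set q : ℝ := 2 ^ (n - m) with hqdef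
  have hq0 : 0 < q := Real.rpow_pos_of_pos (by norm_num) _
  have hq1 : q < 1 := Real.rpow_lt_one_of_one_lt_of_neg (by norm_num) (by linarith)
  set C : ℝ := 2 * 5 ^ m * (K * 16 ^ n * (1 - q)⁻¹) with hCdef
  have hC : 0 < C := by
    have h5 : (0:ℝ) < 5 ^ m := Real.rpow_pos_of_pos (by norm_num) _
    have h16 : (0:ℝ) < 16 ^ n := Real.rpow_pos_of_pos (by norm_num) _
    have : (0:ℝ) < (1 - q)⁻¹ := by rw [inv_pos]; linarith
    positivity
  refine ⟨C, hC, ?_⟩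
  intro t s ht hts I z x₁ x₂ hcount
  have hs : 0 < s := lt_of_lt_of_le ht hts
  have hst1 : (1:ℝ) ≤ s / t := (one_le_div ht).2 hts
  -- nonnegativity of bases
  have hA : ∀ β : I, (0:ℝ) ≤ setDist (ball x₁ t) (ball (z β) t) := fun β => setDist_nonneg' _ _
  have hB : ∀ β : I, (0:ℝ) ≤ setDist (ball (z β) t) (ball x₂ t) := fun β => setDist_nonneg' _ _
  have hCc : (0:ℝ) ≤ setDist (ball x₁ t) (ball x₂ t) := setDist_nonneg' _ _
  rw [ENNReal.tsum_eq_iSup_sum]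
  apply iSup_le
  intro F
  have hterm_nonneg : ∀ β ∈ F, (0:ℝ) ≤
      (1 + setDist (ball x₁ t) (ball (z β) t) / s) ^ (-γ) *
        (1 + setDist (ball (z β) t) (ball x₂ t) / s) ^ (-δ) := by
    intro β _
    apply mul_nonneg <;> apply Real.rpow_nonneg
    · have := hA β; have : (0:ℝ) ≤ setDist (ball x₁ t) (ball (z β) t) / s := div_nonneg this hs.le
      linarith
    · have := hB β; have : (0:ℝ) ≤ setDist (ball (z β) t) (ball x₂ t) / s := div_nonneg this hs.le
      linarith
  rw [← ENNReal.ofReal_sum_of_nonneg hterm_nonneg]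
  apply ENNReal.ofReal_le_ofReal
  -- real-valued estimate
  set c : ℝ := setDist (ball x₁ t) (ball x₂ t) / s with hcdef
  have hc0 : 0 ≤ c := div_nonneg hCc hs.le
  have hc1 : (0:ℝ) < 1 + c := by linarith
  -- termwise bound
  have step : ∀ β ∈ F,
      (1 + setDist (ball x₁ t) (ball (z β) t) / s) ^ (-γ) *
        (1 + setDist (ball (z β) t) (ball x₂ t) / s) ^ (-δ) ≤
      5 ^ m * (1 + c) ^ (-m) *
        ((1 + setDist (ball x₁ t) (ball (z β) t) / s) ^ (-m) +
          (1 + setDist (ball (z β) t) (ball x₂ t) / s) ^ (-m)) := by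
    intro β _
    set a : ℝ := setDist (ball x₁ t) (ball (z β) t) / s with hadef
    set b : ℝ := setDist (ball (z β) t) (ball x₂ t) / s with hbdef
    have ha0 : 0 ≤ a := div_nonneg (hA β) hs.le
    have hb0 : 0 ≤ b := div_nonneg (hB β) hs.le
    have hA1 : (1:ℝ) ≤ 1 + a := by linarith
    have hB1 : (1:ℝ) ≤ 1 + b := by linarith
    have h1 : (1 + a) ^ (-γ) ≤ (1 + a) ^ (-m) :=
      Real.rpow_le_rpow_of_exponent_le hA1 (neg_le_neg (min_le_left γ δ))
    have h2 : (1 + b) ^ (-δ) ≤ (1 + b) ^ (-m) :=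
      Real.rpow_le_rpow_of_exponent_le hB1 (neg_le_neg (min_le_right γ δ))
    have hprod : (1 + a) ^ (-γ) * (1 + b) ^ (-δ) ≤ (1 + a) ^ (-m) * (1 + b) ^ (-m) := by
      apply mul_le_mul h1 h2 (Real.rpow_nonneg (by linarith) _) (Real.rpow_nonneg (by linarith) _)
    refine hprod.trans ?_
    apply pointwise_bound ha0 hb0 hc0 _ hm0.le
    -- c ≤ a + b + 4
    have hd1 : dist x₁ (z β) ≤ setDist (ball x₁ t) (ball (z β) t) + 2 * t := by
      have := dist_sub_le_setDist (x := x₁) (y := z β) ht; linarith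
    have hd2 : dist (z β) x₂ ≤ setDist (ball (z β) t) (ball x₂ t) + 2 * t := by
      have := dist_sub_le_setDist (x := z β) (y := x₂) ht; linarith
    have hd3 : setDist (ball x₁ t) (ball x₂ t) ≤ dist x₁ x₂ :=
      setDist_le_dist (mem_ball_self ht) (mem_ball_self ht)
    have htri := dist_triangle x₁ (z β) x₂
    have hsd : setDist (ball x₁ t) (ball x₂ t) ≤
        setDist (ball x₁ t) (ball (z β) t) + setDist (ball (z β) t) (ball x₂ t) + 4 * s := by
      linarith
    rw [hcdef, hadef, hbdef]
    rw [div_le_iff₀ hs] at *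
    calc setDist (ball x₁ t) (ball x₂ t)
        ≤ setDist (ball x₁ t) (ball (z β) t) + setDist (ball (z β) t) (ball x₂ t) + 4 * s := hsd
      _ = (setDist (ball x₁ t) (ball (z β) t) / s + setDist (ball (z β) t) (ball x₂ t) / s + 4) * s := by
          field_simp
      _ ≤ _ := le_refl _
  -- sum the bound
  have hS1 := schur_sum hn hm hK ht hts x₁ (fun j => hcount j x₁) F
  have hS2' := schur_sum hn hm hK ht hts x₂ (fun j => hcount j x₂) F
  have hS2 : ∑ β ∈ F, (1 + setDist (ball (z β) t) (ball x₂ t) / s) ^ (-m) ≤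
      K * 16 ^ n * (s / t) ^ n * (1 - q)⁻¹ := by
    have : ∀ β : I, setDist (ball (z β) t) (ball x₂ t) = setDist (ball x₂ t) (ball (z β) t) :=
      fun β => setDist_comm' _ _
    simpa only [this] using hS2'
  have hsum : ∑ β ∈ F, ((1 + setDist (ball x₁ t) (ball (z β) t) / s) ^ (-γ) *
        (1 + setDist (ball (z β) t) (ball x₂ t) / s) ^ (-δ)) ≤
      5 ^ m * (1 + c) ^ (-m) * (2 * (K * 16 ^ n * (s / t) ^ n * (1 - q)⁻¹)) := by
    calc ∑ β ∈ F, ((1 + setDist (ball x₁ t) (ball (z β) t) / s) ^ (-γ) *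
            (1 + setDist (ball (z β) t) (ball x₂ t) / s) ^ (-δ))
        ≤ ∑ β ∈ F, 5 ^ m * (1 + c) ^ (-m) *
            ((1 + setDist (ball x₁ t) (ball (z β) t) / s) ^ (-m) +
              (1 + setDist (ball (z β) t) (ball x₂ t) / s) ^ (-m)) := Finset.sum_le_sum step
      _ = 5 ^ m * (1 + c) ^ (-m) *
            (∑ β ∈ F, (1 + setDist (ball x₁ t) (ball (z β) t) / s) ^ (-m) +
              ∑ β ∈ F, (1 + setDist (ball (z β) t) (ball x₂ t) / s) ^ (-m)) := by
          rw [← Finset.mul_sum, Finset.sum_add_distrib]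
      _ ≤ 5 ^ m * (1 + c) ^ (-m) * (2 * (K * 16 ^ n * (s / t) ^ n * (1 - q)⁻¹)) := by
          apply mul_le_mul_of_nonneg_left _ (by positivity)
          linarith
  refine hsum.trans ?_
  -- final constant comparison
  have hstn : (s / t) ^ n ≤ (s / t) ^ (n + ε) :=
    Real.rpow_le_rpow_of_exponent_le hst1 (by linarith)
  have hfac : (0:ℝ) ≤ 5 ^ m * (1 + c) ^ (-m) := by positivity
  have hKfac : (0:ℝ) ≤ 2 * (K * 16 ^ n * (1 - q)⁻¹) := by
    have h16 : (0:ℝ) < 16 ^ n := Real.rpow_pos_of_pos (by norm_num) _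
    have : (0:ℝ) < (1 - q)⁻¹ := by rw [inv_pos]; linarith
    positivity
  calc 5 ^ m * (1 + c) ^ (-m) * (2 * (K * 16 ^ n * (s / t) ^ n * (1 - q)⁻¹))
      ≤ 5 ^ m * (1 + c) ^ (-m) * (2 * (K * 16 ^ n * (s / t) ^ (n + ε) * (1 - q)⁻¹)) := by
        apply mul_le_mul_of_nonneg_left _ hfac
        have h16 : (0:ℝ) < 16 ^ n := Real.rpow_pos_of_pos (by norm_num) _
        have hq' : (0:ℝ) < (1 - q)⁻¹ := by rw [inv_pos]; linarith
        have := mul_le_mul_of_nonneg_left hstn (by positivity : (0:ℝ) ≤ K * 16 ^ n)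
        nlinarith
    _ = C * (s / t) ^ (n + ε) * (1 + c) ^ (-m) := by rw [hCdef]; ring
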